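/- Let T be the M×M lower-triangular Toeplitz matrix with entries T_{ij} = t_{i-j} for i ≥ j (and 0 otherwise), where t₀, t₁, ..., t_{M-1} are real numbers. Define p₀ = e^{t₀} and p_i = Σ_{l=0}^{i-1} ((i-l)/i) p_l t_{i-l} for 1 ≤ i ≤ M-1. Then Σ_{i=0}^{M-1} p_i equals the induced ℓ₁ norm of the matrix exponential e^T when all t_k ≥ 0 for k ≥ 1, i.e., Σ_{i=0}^{M-1} p_i = Σ_{i=0}^{M-1} (e^T)_{i,0}, which is the column sum of the first column of e^T. -/

import Mathlib

/-!
Write `f = ∑ tₖ Xᵏ` and let `lowerToeplitz M f` be the lower-triangular Toeplitz matrix of the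
first `M` coefficients of a power series. This map is multiplicative, so `T ^ n` is the Toeplitz
matrix of `f ^ n` and the first column of `e^T` is `qₖ = ∑ₙ [Xᵏ] fⁿ / n!`. Applying the Euler
operator `X d/dX` to `f ^ (n + 1)` gives `k [Xᵏ] fⁿ⁺¹ = (n + 1) ∑_{l<k} [Xˡ] fⁿ (k - l) t_{k-l}`;
dividing by `(n + 1)!` and summing over `n` turns this into `k qₖ = ∑_{l<k} (k - l) t_{k-l} q_l`,
the recursion defining `p`, while `q₀ = ∑ t₀ⁿ / n! = e^{t₀}`. Hence `p = q` on `0, …, M - 1`.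
-/

open Finset PowerSeries
open scoped Nat

namespace PowerSeries

variable {R : Type*}

section Toeplitz

variable [Semiring R] {M : ℕ}

variable (M) in
noncomputable def lowerToeplitz (f : R⟦X⟧) : Matrix (Fin M) (Fin M) R :=
  Matrix.of fun i j => if (j : ℕ) ≤ i then coeff (i - j : ℕ) f else 0

theorem lowerToeplitz_apply (f : R⟦X⟧) (i j : Fin M) :
    lowerToeplitz M f i j = if (j : ℕ) ≤ i then coeff (i - j : ℕ) f else 0 :=
  rfl

theorem lowerToeplitz_one : lowerToeplitz M (1 : R⟦X⟧) = 1 := by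
  ext i j
  simp only [lowerToeplitz_apply, coeff_one, Matrix.one_apply, Fin.ext_iff]
  split_ifs <;> first | rfl | omega

theorem lowerToeplitz_mul (f g : R⟦X⟧) :
    lowerToeplitz M (f * g) = lowerToeplitz M f * lowerToeplitz M g := by
  ext i j
  set F : ℕ → R := fun k =>
    (if k ≤ (i : ℕ) then coeff (i - k) f else 0) * (if (j : ℕ) ≤ k then coeff (k - j) g else 0)
  simp only [lowerToeplitz_apply, Matrix.mul_apply, coeff_mul]
  rw [Fin.sum_univ_eq_sum_range F]
  split_ifs with hji
  -- the nonzero terms `j ≤ k ≤ i` match the antidiagonal of `i - j` via `k ↦ (i - k, k - j)`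
  · rw [← sum_subset (s₁ := Icc (j : ℕ) i)
      (fun k hk => by simp only [mem_Icc, mem_range] at hk ⊢; omega)
      (fun k _ hk => by simp only [mem_Icc, F] at hk ⊢; split_ifs <;> first | omega | simp)]
    refine sum_nbij' (fun p => i - p.1) (fun k => (i - k, k - j)) ?_ ?_ ?_ ?_ ?_
    · intro p hp; simp only [mem_Icc, HasAntidiagonal.mem_antidiagonal] at hp ⊢; omega
    · intro k hk; simp only [mem_Icc, HasAntidiagonal.mem_antidiagonal] at hk ⊢; omega
    · intro p hp; simp only [HasAntidiagonal.mem_antidiagonal] at hp; ext <;> dsimp only <;> omega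
    · intro k hk; simp only [mem_Icc] at hk; omega
    · intro p hp
      simp only [HasAntidiagonal.mem_antidiagonal] at hp
      simp only [F, if_pos (Nat.sub_le _ _), if_pos (show (j : ℕ) ≤ i - p.1 by omega)]
      congr 3 <;> omega
  · refine (sum_eq_zero fun k _ => ?_).symm
    simp only [F]; split_ifs <;> first | omega | simp

theorem lowerToeplitz_pow (f : R⟦X⟧) (n : ℕ) :
    lowerToeplitz M (f ^ n) = lowerToeplitz M f ^ n := by
  induction n with
  | zero => exact lowerToeplitz_one
  | succ n ih => rw [pow_succ, lowerToeplitz_mul, ih, pow_succ]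

end Toeplitz

theorem coeff_X_mul_derivative [CommSemiring R] (f : R⟦X⟧) (k : ℕ) :
    coeff k (X * d⁄dX R f) = k * coeff k f := by
  cases k with
  | zero => simp
  | succ k => rw [coeff_succ_X_mul, coeff_derivative, mul_comm]; push_cast; rfl

theorem natCast_mul_coeff_pow_succ [CommSemiring R] (f : R⟦X⟧) (n k : ℕ) :
    k * coeff k (f ^ (n + 1)) =
      (n + 1) * ∑ l ∈ range k, coeff l (f ^ n) * ((k - l : ℕ) * coeff (k - l) f) := by
  have hEuler : X * d⁄dX R (f ^ (n + 1)) = C (n + 1 : R) * (f ^ n * (X * d⁄dX R f)) := by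
    rw [derivative_pow, Nat.add_sub_cancel]; simp only [map_add, map_one, map_natCast]
    push_cast; ring
  rw [← coeff_X_mul_derivative, hEuler, coeff_C_mul, coeff_mul,
    Nat.sum_antidiagonal_eq_sum_range_succ (fun a b => coeff a (f ^ n) * coeff b (X * d⁄dX R f)),
    sum_range_succ]
  simp [coeff_X_mul_derivative]

section ExpSeries

variable {𝕂 : Type*} [Field 𝕂] [CharZero 𝕂] [TopologicalSpace 𝕂] [IsTopologicalRing 𝕂]

theorem hasSum_inv_factorial_mul_coeff_pow_of_hasSum_lt (f : 𝕂⟦X⟧) {k : ℕ} (hk : k ≠ 0)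
    {q : ℕ → 𝕂} (hq : ∀ l < k, HasSum (fun n => (n ! : 𝕂)⁻¹ * coeff l (f ^ n)) (q l)) :
    HasSum (fun n => (n ! : 𝕂)⁻¹ * coeff k (f ^ n))
      (∑ l ∈ range k, ((k - l : ℕ) / k : 𝕂) * q l * coeff (k - l) f) := by
  have hk' : (k : 𝕂) ≠ 0 := Nat.cast_ne_zero.mpr hk
  have hshift (n : ℕ) : (k : 𝕂) * (((n + 1)! : 𝕂)⁻¹ * coeff k (f ^ (n + 1))) =
      ∑ l ∈ range k, ((k - l : ℕ) * coeff (k - l) f) * ((n ! : 𝕂)⁻¹ * coeff l (f ^ n)) := by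
    rw [mul_left_comm, natCast_mul_coeff_pow_succ, Nat.factorial_succ, Nat.cast_mul, Nat.cast_succ,
      mul_sum, mul_sum]
    refine sum_congr rfl fun l _ => ?_
    field_simp
  have hsum : HasSum (fun n => (k : 𝕂) * ((n ! : 𝕂)⁻¹ * coeff k (f ^ n)))
      (∑ l ∈ range k, ((k - l : ℕ) * coeff (k - l) f) * q l) := by
    rw [← hasSum_nat_add_iff' 1]
    simpa [hk, hshift] using hasSum_sum fun l hl => (hq l (mem_range.mp hl)).mul_left _
  rw [← hasSum_mul_left_iff hk', mul_sum]
  convert hsum using 2 with l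
  field_simp

end ExpSeries

section RCLike

variable {𝕂 : Type*} [RCLike 𝕂]

theorem hasSum_inv_factorial_mul_coeff_zero_pow (f : 𝕂⟦X⟧) :
    HasSum (fun n => (n ! : 𝕂)⁻¹ * coeff 0 (f ^ n)) (NormedSpace.exp (constantCoeff f)) := by
  simpa [coeff_zero_eq_constantCoeff_apply, div_eq_inv_mul] using
    NormedSpace.expSeries_div_hasSum_exp (constantCoeff f)

theorem hasSum_inv_factorial_mul_coeff_pow_of_recursion (f : 𝕂⟦X⟧) {N : ℕ} {p : ℕ → 𝕂}
    (hp0 : p 0 = NormedSpace.exp (constantCoeff f))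
    (hp : ∀ k, 1 ≤ k → k < N → p k = ∑ l ∈ range k, ((k - l : ℕ) / k : 𝕂) * p l * coeff (k - l) f)
    {k : ℕ} (hk : k < N) : HasSum (fun n => (n ! : 𝕂)⁻¹ * coeff k (f ^ n)) (p k) := by
  induction k using Nat.strong_induction_on with
  | _ k ih =>
    rcases Nat.eq_zero_or_pos k with rfl | hk1
    · exact hp0 ▸ hasSum_inv_factorial_mul_coeff_zero_pow f
    · rw [hp k hk1 hk]
      exact hasSum_inv_factorial_mul_coeff_pow_of_hasSum_lt f hk1.ne' fun l hl =>
        ih l hl (hl.trans hk)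

end RCLike

end PowerSeries

theorem Matrix.hasSum_inv_factorial_mul_pow_apply {m 𝕂 : Type*} [Fintype m] [DecidableEq m]
    [RCLike 𝕂] (A : Matrix m m 𝕂) (i j : m) :
    HasSum (fun n => (n ! : 𝕂)⁻¹ * (A ^ n) i j) (NormedSpace.exp A i j) :=
  open scoped Norms.Operator in
  Pi.hasSum.mp (Pi.hasSum.mp (NormedSpace.exp_series_hasSum_exp' (𝕂 := 𝕂) A) i) j

theorem sum_recursion_eq_column_sum_exp_general (M : ℕ) (hM : 0 < M)
    (t : ℕ → ℝ)
    (T : Matrix (Fin M) (Fin M) ℝ)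
    (hT : ∀ i j : Fin M, T i j = if (j : ℕ) ≤ (i : ℕ) then t ((i : ℕ) - (j : ℕ)) else 0)
    (p : ℕ → ℝ) (hp0 : p 0 = Real.exp (t 0))
    (hp : ∀ i : ℕ, 1 ≤ i → i ≤ M - 1 →
      p i = ∑ l ∈ Finset.range i, (((i - l : ℕ) : ℝ) / i) * p l * t (i - l)) :
    ∑ i ∈ Finset.range M, p i = ∑ i : Fin M, NormedSpace.exp T i ⟨0, hM⟩ := by
  set f : ℝ⟦X⟧ := mk t
  have hTf : T = lowerToeplitz M f := by
    ext i j
    simp [hT, lowerToeplitz_apply, f]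
  have hpf (i : Fin M) : HasSum (fun n => (n ! : ℝ)⁻¹ * coeff i (f ^ n)) (p i) :=
    hasSum_inv_factorial_mul_coeff_pow_of_recursion f
      (by simpa [f, Real.exp_eq_exp_ℝ] using hp0)
      (fun k hk1 hkM => by simpa [f] using hp k hk1 (by omega)) i.isLt
  rw [Finset.sum_range]
  refine Finset.sum_congr rfl fun i _ => (hpf i).unique ?_
  simpa [hTf, ← lowerToeplitz_pow, lowerToeplitz_apply] using
    Matrix.hasSum_inv_factorial_mul_pow_apply T i ⟨0, hM⟩

/-- For a lower-triangular Toeplitz matrix `T` with nonnegative subdiagonal entries,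
the quantities `p₀ = e^{t₀}`, `p_i = Σ_{l<i} ((i-l)/i) p_l t_{i-l}` sum to the induced
ℓ₁ norm of `e^T`, i.e. to the sum of the first column of the matrix exponential. -/
theorem sum_recursion_eq_column_sum_exp (M : ℕ) (hM : 0 < M)
    (t : ℕ → ℝ) (htnn : ∀ k, 1 ≤ k → 0 ≤ t k)
    (T : Matrix (Fin M) (Fin M) ℝ)
    (hT : ∀ i j : Fin M, T i j = if (j : ℕ) ≤ (i : ℕ) then t ((i : ℕ) - (j : ℕ)) else 0)
    (p : ℕ → ℝ) (hp0 : p 0 = Real.exp (t 0))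
    (hp : ∀ i : ℕ, 1 ≤ i → i ≤ M - 1 →
      p i = ∑ l ∈ Finset.range i, (((i - l : ℕ) : ℝ) / i) * p l * t (i - l)) :
    ∑ i ∈ Finset.range M, p i = ∑ i : Fin M, NormedSpace.exp T i ⟨0, hM⟩ :=
  sum_recursion_eq_column_sum_exp_general M hM t T hT p hp0 hp
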